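/- arXiv:2007.02649 — 2 statements merged into one kernel-verified Lean document; each statement's English description precedes it below -/
import Mathlib

section
/- Let G be a group with a pseudo-norm ν and let n, d be integers with n − 1 > d ≥ 0. If a cochain c̄ : G^{n−1} → ℝ satisfies |c̄(g_1,…,g_{n−1})| ≤ C·ν_{(n−1,d)}(g_1,…,g_{n−1}) + D for all g_1,…,g_{n−1} ∈ G (for some constants C, D ≥ 0), then its coboundary satisfies |δ̄c̄(g_1,…,g_n)| ≤ (n+1)·(C·ν_{(n,d)}(g_1,…,g_n) + D) for all g_1,…,g_n ∈ G. In particular, the coboundary map δ̄ sends C^{n−1}_{(d)}(G,ν) into C^n_{(d)}(G,ν), so (C^•_{(d)}(G,ν), δ̄) is a subcomplex of the inhomogeneous cochain complex. -/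
/-!
Every face `h` of `g` (the `n + 2` arguments of `c̄` in `δ̄c̄(g)`) satisfies
`ν_{(n,d)}(h) ≤ ν_{(n+1,d)}(g)`. Indeed, a face arises from a degeneracy map
`ψ : Fin (n + 1) → Fin n` collapsing two adjacent coordinates, and by subadditivity (or
nonnegativity, for the outer faces) `ν (h j)` is at most the sum of `ν` over the `ψ`-fibre
of `j`.
The triangle inequality then bounds `|δ̄c̄(g)|` by `n + 2` copies of `C·ν_{(n+1,d)}(g) + D`.
-/

/-- `ν` is a pseudo-norm on the group `G`: nonnegative, subadditive,
symmetric under inverses, and vanishing at the identity. -/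
def IsPseudoNorm {G : Type*} [Group G] (ν : G → ℝ) : Prop :=
  (∀ g : G, 0 ≤ ν g) ∧ (∀ g h : G, ν (g * h) ≤ ν g + ν h) ∧
    (∀ g : G, ν g⁻¹ = ν g) ∧ ν (1 : G) = 0

/-- `ν_{(n,d)}(g_1,…,g_n)`: the minimum over subsets `I ⊆ {1,…,n}` with
`|I| = n - d` of `∑_{i ∈ I} ν (g i)`. -/
noncomputable def nuNd {G : Type*} (ν : G → ℝ) {n : ℕ} (d : ℕ) (g : Fin n → G) : ℝ :=
  sInf {x : ℝ | ∃ I : Finset (Fin n), I.card = n - d ∧ x = ∑ i ∈ I, ν (g i)}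

/-- A cochain `c : G^n → ℝ` belongs to `C^n_{(d)}(G,ν)` if there are constants
`C, D ≥ 0` with `|c(g_1,…,g_n)| ≤ C·ν_{(n,d)}(g_1,…,g_n) + D` for all tuples. -/
def MemControlled {G : Type*} [Group G] (ν : G → ℝ) {n : ℕ} (d : ℕ)
    (c : (Fin n → G) → ℝ) : Prop :=
  ∃ C D : ℝ, 0 ≤ C ∧ 0 ≤ D ∧ ∀ g : Fin n → G, |c g| ≤ C * nuNd ν d g + D

/-- The inhomogeneous coboundary of a cochain `c : G^n → ℝ`:
`δ̄c(g_1,…,g_{n+1}) = c(g_2,…,g_{n+1}) + ∑_{i=1}^{n} (−1)^i c(g_1,…,g_i g_{i+1},…,g_{n+1})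
  + (−1)^{n+1} c(g_1,…,g_n)`. -/
noncomputable def coboundary {G : Type*} [Group G] {n : ℕ} (c : (Fin n → G) → ℝ)
    (g : Fin (n + 1) → G) : ℝ :=
  c (fun i => g i.succ)
    + ∑ i : Fin n, (-1 : ℝ) ^ ((i : ℕ) + 1) *
        c (fun j => if (j : ℕ) < (i : ℕ) then g j.castSucc
            else if (j : ℕ) = (i : ℕ) then g j.castSucc * g j.succ
            else g j.succ)
    + (-1 : ℝ) ^ (n + 1) * c (fun i => g i.castSucc)

open Finset

section NuNd

variable {G : Type*} (ν : G → ℝ)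

theorem nuNd_le_sum (hν : ∀ x, 0 ≤ ν x) {n d : ℕ} (g : Fin n → G) {J : Finset (Fin n)}
    (hJ : n - d ≤ #J) : nuNd ν d g ≤ ∑ j ∈ J, ν (g j) := by
  obtain ⟨J', hJ'J, hJ'⟩ := exists_subset_card_eq hJ
  have hbdd : BddBelow {x : ℝ | ∃ I : Finset (Fin n), #I = n - d ∧ x = ∑ i ∈ I, ν (g i)} :=
    ⟨0, by rintro x ⟨I, -, rfl⟩; exact sum_nonneg fun i _ => hν (g i)⟩
  calc nuNd ν d g ≤ ∑ j ∈ J', ν (g j) := csInf_le hbdd ⟨J', hJ', rfl⟩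
    _ ≤ ∑ j ∈ J, ν (g j) := sum_le_sum_of_subset_of_nonneg hJ'J fun j _ _ => hν (g j)

theorem le_nuNd {n d : ℕ} (g : Fin n → G) {a : ℝ}
    (h : ∀ I : Finset (Fin n), #I = n - d → a ≤ ∑ i ∈ I, ν (g i)) : a ≤ nuNd ν d g := by
  obtain ⟨I, -, hI⟩ := exists_subset_card_eq (s := (univ : Finset (Fin n))) (n := n - d)
    (by simp)
  exact le_csInf ⟨_, I, hI, rfl⟩ (by rintro x ⟨I, hI, rfl⟩; exact h I hI)

/-- Given `I` of size `n + 1 - d`, the indices `j` whose whole `ψ`-fibre lies in `I` form a set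
of size at least `n - d`, since its complement is the image of `Iᶜ`. -/
theorem nuNd_le_of_le_sum_fiber (hν : ∀ x, 0 ≤ ν x) {n d : ℕ} (ψ : Fin (n + 1) → Fin n)
    (h : Fin n → G) (g : Fin (n + 1) → G)
    (hψ : ∀ j, ν (h j) ≤ ∑ k with ψ k = j, ν (g k)) : nuNd ν d h ≤ nuNd ν d g := by
  refine le_nuNd ν g fun I hI => ?_
  set J : Finset (Fin n) := {j | ∀ k, ψ k = j → k ∈ I}
  have hJc : Jᶜ ⊆ Iᶜ.image ψ := fun j hj => by
    simp only [J, mem_compl, mem_filter_univ, not_forall] at hj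
    obtain ⟨k, rfl, hk⟩ := hj
    exact mem_image_of_mem ψ (mem_compl.2 hk)
  have hJ : n - d ≤ #J := by
    have hJc_card := (card_le_card hJc).trans card_image_le
    have hJ_card := card_le_univ J
    simp only [card_compl, Fintype.card_fin] at hJc_card hJ_card
    omega
  have hfiber : ∀ j ∈ J, ({k | ψ k = j} : Finset _) = {k ∈ I | ψ k = j} := fun j hj => by
    ext k
    simp only [J, mem_filter_univ] at hj
    simp only [mem_filter, mem_univ, true_and]
    exact ⟨fun hk => ⟨hj k hk, hk⟩, And.right⟩
  calc nuNd ν d h ≤ ∑ j ∈ J, ν (h j) := nuNd_le_sum ν hν h hJ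
    _ ≤ ∑ j ∈ J, ∑ k ∈ I with ψ k = j, ν (g k) :=
        sum_le_sum fun j hj => (hψ j).trans_eq (by rw [hfiber j hj])
    _ = ∑ k ∈ I with ψ k ∈ J, ν (g k) := sum_fiberwise_eq_sum_filter I J ψ _
    _ ≤ ∑ k ∈ I, ν (g k) :=
        sum_le_sum_of_subset_of_nonneg (filter_subset _ _) fun k _ _ => hν _

theorem nuNd_comp_le (hν : ∀ x, 0 ≤ ν x) {n d : ℕ} {ψ : Fin (n + 1) → Fin n}
    {e : Fin n → Fin (n + 1)} (he : Function.LeftInverse ψ e) (g : Fin (n + 1) → G) :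
    nuNd ν d (g ∘ e) ≤ nuNd ν d g :=
  nuNd_le_of_le_sum_fiber ν hν ψ _ g fun j =>
    single_le_sum (f := fun k => ν (g k)) (fun k _ => hν _) (by simpa using he j)

end NuNd

section Faces

variable {G : Type*} [Group G]

def mulFace {n : ℕ} (g : Fin (n + 1) → G) (i : Fin n) : Fin n → G := fun j =>
  if (j : ℕ) < (i : ℕ) then g j.castSucc
  else if (j : ℕ) = (i : ℕ) then g j.castSucc * g j.succ
  else g j.succ

theorem nuNd_mulFace_le {ν : G → ℝ} (hν : IsPseudoNorm ν) {n d : ℕ} (g : Fin (n + 1) → G)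
    (i : Fin n) : nuNd ν d (mulFace g i) ≤ nuNd ν d g := by
  obtain ⟨hν0, hνmul, -, -⟩ := hν
  refine nuNd_le_of_le_sum_fiber ν hν0 i.predAbove _ g fun j => ?_
  have single {k : Fin (n + 1)} (hk : i.predAbove k = j) :
      ν (g k) ≤ ∑ k with i.predAbove k = j, ν (g k) :=
    single_le_sum (f := fun k => ν (g k)) (fun k _ => hν0 _) (by simpa using hk)
  rcases lt_trichotomy j i with hji | rfl | hij
  · simpa [mulFace, hji] using single (Fin.predAbove_castSucc_of_le _ _ hji.le)
  · have hpair : {j.castSucc, j.succ} ⊆ ({k | j.predAbove k = j} : Finset _) := by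
      simp [insert_subset_iff]
    calc ν (mulFace g j j) ≤ ν (g j.castSucc) + ν (g j.succ) := by
          simpa [mulFace] using hνmul _ _
      _ = ∑ k ∈ {j.castSucc, j.succ}, ν (g k) :=
          (sum_pair (f := fun k => ν (g k)) Fin.castSucc_lt_succ.ne).symm
      _ ≤ _ := sum_le_sum_of_subset_of_nonneg hpair fun k _ _ => hν0 _
  · have hji : ¬ (j : ℕ) < i ∧ (j : ℕ) ≠ i := by omega
    simpa [mulFace, hji] using single (Fin.predAbove_succ_of_le _ _ hij.le)

theorem abs_coboundary_le {n : ℕ} (c : (Fin n → G) → ℝ) (g : Fin (n + 1) → G) {K : ℝ}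
    (hfirst : |c fun i => g i.succ| ≤ K) (hmul : ∀ i, |c (mulFace g i)| ≤ K)
    (hlast : |c fun i => g i.castSucc| ≤ K) : |coboundary c g| ≤ ((n : ℝ) + 2) * K := by
  have hsum : |∑ i : Fin n, (-1 : ℝ) ^ ((i : ℕ) + 1) * c (mulFace g i)| ≤ n * K :=
    (abs_sum_le_sum_abs _ _).trans <| by
      simpa [abs_mul] using sum_le_sum fun i (_ : i ∈ univ) => hmul i
  calc |coboundary c g|
      ≤ |c fun i => g i.succ| + |∑ i : Fin n, (-1 : ℝ) ^ ((i : ℕ) + 1) * c (mulFace g i)|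
          + |(-1 : ℝ) ^ (n + 1) * c fun i => g i.castSucc| := abs_add_three _ _ _
    _ ≤ K + n * K + K := by
        gcongr
        simpa [abs_mul] using hlast
    _ = ((n : ℝ) + 2) * K := by ring

end Faces

/-- If `c̄ ∈ C^{n}_{(d)}(G,ν)` (with bound `C·ν_{(n,d)} + D`), then its coboundary
satisfies `|δ̄c̄(g_1,…,g_{n+1})| ≤ (n+2)·(C·ν_{(n+1,d)}(g_1,…,g_{n+1}) + D)`.
In particular `δ̄` maps `C^{n}_{(d)}(G,ν)` into `C^{n+1}_{(d)}(G,ν)`, so the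
norm controlled cochains form a subcomplex of the inhomogeneous complex.
(Here the paper's degrees `n-1 > d ≥ 0` correspond to `d < n` below.) -/
theorem coboundary_mem_controlled {G : Type*} [Group G] (ν : G → ℝ)
    (hν : IsPseudoNorm ν) (n d : ℕ) (hd : d < n)
    (C D : ℝ) (hC : 0 ≤ C) (hD : 0 ≤ D) (c : (Fin n → G) → ℝ)
    (hc : ∀ g : Fin n → G, |c g| ≤ C * nuNd ν d g + D) :
    (∀ g : Fin (n + 1) → G,
      |coboundary c g| ≤ ((n : ℝ) + 2) * (C * nuNd ν d g + D)) ∧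
    MemControlled ν d (coboundary c) := by
  obtain ⟨m, rfl⟩ : ∃ m, n = m + 1 := ⟨n - 1, by omega⟩
  have hface (g : Fin (m + 2) → G) (h : Fin (m + 1) → G) (hle : nuNd ν d h ≤ nuNd ν d g) :
      |c h| ≤ C * nuNd ν d g + D :=
    (hc h).trans (by gcongr)
  have hbound (g : Fin (m + 2) → G) :
      |coboundary c g| ≤ ((m + 1 : ℕ) + 2 : ℝ) * (C * nuNd ν d g + D) :=
    abs_coboundary_le c g
      (hface g _ (nuNd_comp_le ν hν.1 (ψ := Fin.predAbove 0)
        (fun j => Fin.predAbove_succ_of_le _ _ (Fin.zero_le j)) g))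
      (fun i => hface g _ (nuNd_mulFace_le hν g i))
      (hface g _ (nuNd_comp_le ν hν.1 (ψ := Fin.predAbove (Fin.last m))
        (fun _ => Fin.predAbove_last_castSucc) g))
  refine ⟨hbound, ((m + 1 : ℕ) + 2 : ℝ) * C, ((m + 1 : ℕ) + 2 : ℝ) * D, by positivity,
    by positivity, fun g => (hbound g).trans_eq (by ring)⟩
end

section
/- Let n ≥ 1 and 1 ≤ l ≤ n be integers, and let ν_l be the pseudo-norm on ℤ^n defined by ν_l(m_1,…,m_n) = |m_1| + ⋯ + |m_l|. The set of group homomorphisms φ : ℤ^n → ℝ that are Lipschitz with respect to ν_l is a real vector space of dimension l, spanned by the coordinate projections φ_i(m_1,…,m_n) = m_i for 1 ≤ i ≤ l. Equivalently, H^1_{ν_l}(ℤ^n) ≅ ℝ^l. -/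
/-!
A homomorphism `φ : ℤⁿ → ℝ` is determined by its values `φ(eⱼ)` on the standard basis. For a
coordinate `j ≥ l` the pseudo-norm `ν_l` vanishes on all of `ℤ eⱼ`, so a Lipschitz bound makes
`|k φ(eⱼ)|` bounded in `k`, forcing `φ(eⱼ) = 0`; hence `φ = ∑_{i<l} φ(eᵢ) mᵢ`, and evaluating at
`eᵢ` shows the coefficients are unique. Conversely `|∑ aᵢ mᵢ| ≤ (∑ |aᵢ|) ν_l(m)`.
-/

/-- The pseudo-norm `ν_l` on `ℤ^n`: `ν_l(m_1,…,m_n) = |m_1| + ⋯ + |m_l|`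
(here coordinates are indexed by `i : Fin n`, with `i` among the first `l`
coordinates iff `(i : ℕ) < l`). -/
noncomputable def nuL (n l : ℕ) (m : Fin n → ℤ) : ℝ :=
  ∑ i ∈ Finset.univ.filter (fun i : Fin n => (i : ℕ) < l), (|m i| : ℝ)

open Finset

theorem Fin.sum_filter_lt_eq_sum_castLE {M : Type*} [AddCommMonoid M] {n l : ℕ} (hln : l ≤ n)
    (f : Fin n → M) :
    ∑ j ∈ univ.filter (fun j : Fin n => (j : ℕ) < l), f j = ∑ i : Fin l, f (Fin.castLE hln i) := by
  have : univ.filter (fun j : Fin n => (j : ℕ) < l) = univ.map (Fin.castLEEmb hln) := by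
    ext j
    simp only [mem_filter, mem_univ, true_and, mem_map, Fin.castLEEmb_apply]
    exact ⟨fun hj => ⟨⟨j, hj⟩, rfl⟩, by rintro ⟨i, rfl⟩; exact i.isLt⟩
  rw [this, sum_map]
  rfl

theorem AddMonoidHom.apply_eq_sum_apply_single_mul {ι R : Type*} [Fintype ι] [DecidableEq ι]
    [CommRing R] (φ : (ι → ℤ) →+ R) (m : ι → ℤ) : φ m = ∑ j, φ (Pi.single j 1) * m j := by
  conv_lhs => rw [← univ_sum_single m, map_sum]
  refine sum_congr rfl fun j _ => ?_
  rw [← mul_one (m j), ← smul_eq_mul, Pi.single_smul, map_zsmul, zsmul_eq_mul, mul_comm]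
  simp

theorem eq_zero_of_forall_abs_natCast_mul_le {K : Type*} [Field K] [LinearOrder K]
    [IsStrictOrderedRing K] [Archimedean K] {a D : K} (h : ∀ k : ℕ, |k * a| ≤ D) : a = 0 := by
  by_contra ha
  obtain ⟨k, hk⟩ := exists_nat_gt (D / |a|)
  have := h k
  rw [abs_mul, Nat.abs_cast, ← le_div_iff₀ (abs_pos.mpr ha)] at this
  linarith

theorem nuL_single_of_le {n l : ℕ} {j : Fin n} (hj : l ≤ j) (k : ℤ) :
    nuL n l (Pi.single j k) = 0 :=
  sum_eq_zero fun i hi => by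
    have hij : i ≠ j := by rintro rfl; exact absurd (mem_filter.mp hi).2 (by omega)
    simp [hij]

theorem nuL_eq_sum_castLE {n l : ℕ} (hln : l ≤ n) (m : Fin n → ℤ) :
    nuL n l m = ∑ i : Fin l, (|m (Fin.castLE hln i)| : ℝ) :=
  Fin.sum_filter_lt_eq_sum_castLE hln _

section Lipschitz
variable {n l : ℕ} {φ : (Fin n → ℤ) →+ ℝ} {C D : ℝ}

theorem apply_single_eq_zero_of_lipschitz (hφ : ∀ m, |φ m| ≤ C * nuL n l m + D) {j : Fin n}
    (hj : l ≤ j) : φ (Pi.single j 1) = 0 :=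
  eq_zero_of_forall_abs_natCast_mul_le (D := D) fun k => by
    have := hφ (Pi.single j k)
    rwa [nuL_single_of_le hj, mul_zero, zero_add, ← mul_one (k : ℤ), ← smul_eq_mul,
      Pi.single_smul, map_zsmul, zsmul_eq_mul, Int.cast_natCast] at this

theorem eq_sum_castLE_of_lipschitz (hln : l ≤ n) (hφ : ∀ m, |φ m| ≤ C * nuL n l m + D)
    (m : Fin n → ℤ) :
    φ m = ∑ i : Fin l, φ (Pi.single (Fin.castLE hln i) 1) * (m (Fin.castLE hln i) : ℝ) := by
  rw [φ.apply_eq_sum_apply_single_mul,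
    ← Fin.sum_filter_lt_eq_sum_castLE hln (fun j => φ (Pi.single j 1) * (m j : ℝ)),
    sum_filter_of_ne fun j _ hj => ?_]
  by_contra hjl
  exact hj (by rw [apply_single_eq_zero_of_lipschitz hφ (not_lt.mp hjl), zero_mul])

end Lipschitz

theorem sum_mul_single_castLE {n l : ℕ} (hln : l ≤ n) (c : Fin l → ℝ) (i : Fin l) :
    ∑ i' : Fin l, c i' * ((Pi.single (Fin.castLE hln i) 1 : Fin n → ℤ) (Fin.castLE hln i') : ℝ)
      = c i := by
  rw [sum_eq_single i (fun i' _ hi' => ?_) (by simp)]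
  · simp
  · simp [(Fin.castLE_injective hln).ne hi']

theorem abs_sum_mul_castLE_le {n l : ℕ} (hln : l ≤ n) (a : Fin l → ℝ) (m : Fin n → ℤ) :
    |∑ i : Fin l, a i * (m (Fin.castLE hln i) : ℝ)| ≤ (∑ i, |a i|) * nuL n l m := by
  rw [sum_mul]
  refine (abs_sum_le_sum_abs _ _).trans (sum_le_sum fun i _ => ?_)
  rw [abs_mul, nuL_eq_sum_castLE hln]
  gcongr
  exact single_le_sum (f := fun i => (|m (Fin.castLE hln i)| : ℝ)) (fun _ _ => by positivity)
    (mem_univ i)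

theorem lipschitz_homs_zn_eq_span_projections_general (n l : ℕ)
    (hln : l ≤ n) (φ : (Fin n → ℤ) →+ ℝ) :
    (∃ C D : ℝ, 0 ≤ C ∧ 0 ≤ D ∧ ∀ m : Fin n → ℤ, |φ m| ≤ C * nuL n l m + D)
      ↔ ∃! a : Fin l → ℝ, ∀ m : Fin n → ℤ,
          φ m = ∑ i : Fin l, a i * (m (Fin.castLE hln i) : ℝ) := by
  constructor
  · rintro ⟨C, D, -, -, hφ⟩
    refine ⟨_, eq_sum_castLE_of_lipschitz hln hφ, fun b hb => funext fun i => ?_⟩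
    have := hb (Pi.single (Fin.castLE hln i) 1)
    rwa [eq_sum_castLE_of_lipschitz hln hφ, sum_mul_single_castLE, sum_mul_single_castLE,
      eq_comm] at this
  · rintro ⟨a, ha, -⟩
    refine ⟨∑ i, |a i|, 0, by positivity, le_rfl, fun m => ?_⟩
    rw [add_zero, ha m]
    exact abs_sum_mul_castLE_le hln a m

/-- The space of homomorphisms `ℤ^n → ℝ` that are Lipschitz with respect to
`ν_l` is an `l`-dimensional real vector space spanned by the first `l`
coordinate projections: a homomorphism `φ` is Lipschitz with respect to `ν_l`
iff it is a linear combination `φ = ∑_{i ≤ l} a_i·φ_i` of the coordinate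
projections `φ_i(m) = m_i` (`1 ≤ i ≤ l`) with uniquely determined coefficients.
Equivalently, `H^1_{ν_l}(ℤ^n) ≅ ℝ^l`. -/
theorem lipschitz_homs_zn_eq_span_projections (n l : ℕ) (hn : 1 ≤ n)
    (hl : 1 ≤ l) (hln : l ≤ n) (φ : (Fin n → ℤ) →+ ℝ) :
    (∃ C D : ℝ, 0 ≤ C ∧ 0 ≤ D ∧ ∀ m : Fin n → ℤ, |φ m| ≤ C * nuL n l m + D)
      ↔ ∃! a : Fin l → ℝ, ∀ m : Fin n → ℤ,
          φ m = ∑ i : Fin l, a i * (m (Fin.castLE hln i) : ℝ) :=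
  lipschitz_homs_zn_eq_span_projections_general n l hln φ
end
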